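/- Let φ : M_n(F) → M_n(F) be a nonzero map satisfying φ(X ∘ Y) = φ(X) ∘ φ(Y) for all X, Y ∈ M_n(F) and φ(0) = 0. Let P₁, …, P_r ∈ M_n(F) be idempotents that are mutually orthogonal (P_i P_j = 0 for i ≠ j) and let λ₁, …, λ_r ∈ F. Then φ(λ₁P₁ + ⋯ + λ_rP_r) = φ(λ₁P₁) + ⋯ + φ(λ_rP_r). -/

import Mathlib

/-!
A Jordan-multiplicative `f` satisfies `f x ∘ f 1 = f x` (`∘` is `jordanProd`), so the defect
`d = f (∑ λᵢ Pᵢ) - ∑ f (λᵢ Pᵢ)` satisfies `d ∘ f 1 = d`. Complete the `Pᵢ` by `1 - ∑ Pᵢ` and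
diagonalize simultaneously: this gives a frame of rank-one idempotents `R₁, …, Rₙ` (conjugates of
the matrix units `E_kk`), each lying under at most one `Pᵢ`, so that `d ∘ f Rₖ = 0`. It remains
to see `f 1 = ∑ f Rₖ`, for then `d = ∑ d ∘ f Rₖ = 0`.

The `f Rₖ` are orthogonal idempotents below `f 1`, and nonzero: if `f E_T = 0` for a diagonal
idempotent `E_T`, then `w = E_{T∖i} + E_ij + E_ji` has no Peirce `(1 - E_T)`-corner, hence is a
Jordan multiple of `E_T`, so `f (w²) = f E_{T∪j} = 0`; growing `T` gives `f 1 = 0` and `f = 0`.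
An `n`-dimensional space has no room for `n + 1` nonzero orthogonal idempotents, so the remainder
`f 1 - ∑ f Rₖ` vanishes.
-/

open Matrix

section Jordan

variable (F : Type*) [Field F] {A B : Type*} [Ring A] [Algebra F A] [Ring B] [Algebra F B]

def jordanProd : A →ₗ[F] A →ₗ[F] A :=
  (2 : F)⁻¹ • (LinearMap.mul F A + (LinearMap.mul F A).flip)

def IsJordanMultiplicative (f : A → B) : Prop :=
  ∀ x y, f (jordanProd F x y) = jordanProd F (f x) (f y)

variable {F}

theorem jordanProd_apply (x y : A) : jordanProd F x y = (2 : F)⁻¹ • (x * y + y * x) := rfl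

theorem jordanProd_eq_iff (h2 : (2 : F) ≠ 0) {x y z : A} :
    jordanProd F x y = z ↔ x * y + y * x = (2 : F) • z := by
  rw [jordanProd_apply, inv_smul_eq_iff₀ h2]

theorem jordanProd_self (h2 : (2 : F) ≠ 0) (x : A) : jordanProd F x x = x * x :=
  (jordanProd_eq_iff h2).2 (two_smul F (x * x)).symm

theorem jordanProd_one_right (h2 : (2 : F) ≠ 0) (x : A) : jordanProd F x 1 = x :=
  (jordanProd_eq_iff h2).2 (by rw [mul_one, one_mul, two_smul])

theorem map_jordanProd {G : Type*} [FunLike G A B] [AlgHomClass G F A B] (τ : G) (x y : A) :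
    τ (jordanProd F x y) = jordanProd F (τ x) (τ y) := by
  simp only [jordanProd_apply, map_smul, map_add, map_mul]

theorem IsIdempotentElem.mul_eq_self_of_jordanProd_eq_self (h2 : (2 : F) ≠ 0) {u y : A}
    (hu : IsIdempotentElem u) (h : jordanProd F y u = y) : y * u = y ∧ u * y = y := by
  rw [jordanProd_eq_iff h2, two_smul] at h
  have hleft : u * y * u + u * y = u * y + u * y := by
    simpa only [mul_add, ← mul_assoc, hu.eq] using congrArg (u * ·) h
  have hright : y * u + u * y * u = y * u + y * u := by
    simpa only [add_mul, mul_assoc, hu.eq] using congrArg (· * u) h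
  have hcomm : u * y = y * u :=
    (add_right_cancel hleft).symm.trans (add_left_cancel hright)
  have hyu : y * u = y := by
    apply smul_right_injective A h2
    simpa only [two_smul, hcomm] using h
  exact ⟨hyu, hcomm.trans hyu⟩

theorem IsIdempotentElem.mul_eq_zero_of_add_eq_zero (h2 : (2 : F) ≠ 0) {a b : A}
    (ha : IsIdempotentElem a) (h : a * b + b * a = 0) : a * b = 0 := by
  have hleft : a * b + a * b * a = 0 := by
    simpa only [mul_add, ← mul_assoc, ha.eq, mul_zero] using congrArg (a * ·) h
  have hright : a * b * a + b * a = 0 := by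
    simpa only [add_mul, mul_assoc, ha.eq, zero_mul] using congrArg (· * a) h
  have hcomm : a * b = b * a :=
    (eq_neg_of_add_eq_zero_left hleft).trans (eq_neg_of_add_eq_zero_right hright).symm
  apply smul_right_injective A h2
  simpa only [two_smul, smul_zero, ← hcomm] using h

theorem IsIdempotentElem.jordanProd_eq_of_mul_mul_eq_zero (h2 : (2 : F) ≠ 0) {q w : A}
    (hq : IsIdempotentElem q) (hw : (1 - q) * w * (1 - q) = 0) :
    jordanProd F q ((2 : F) • w - q * w * q) = w := by
  rw [jordanProd_eq_iff h2, two_smul]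
  have key : q * (w + w - q * w * q) + (w + w - q * w * q) * q =
      w + w - ((1 - q) * w * (1 - q) + (1 - q) * w * (1 - q)) - (q * q - q) * w * q
        - q * w * (q * q - q) := by
    noncomm_ring
  rw [key, hw, hq.eq]
  simp

end Jordan

theorem map_sum_of_subsingleton_support {M N ι : Type*} [AddCommMonoid M] [AddCommMonoid N]
    {f : M → N} (h0 : f 0 = 0) (s : Finset ι) {c : ι → M}
    (hc : (Function.support c).Subsingleton) :
    f (∑ i ∈ s, c i) = ∑ i ∈ s, f (c i) := by
  by_cases h : ∃ i ∈ s, c i ≠ 0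
  · obtain ⟨i, hi, hci⟩ := h
    have hz : ∀ j ∈ s, j ≠ i → c j = 0 := fun j _ hji =>
      by_contra fun hcj => hji (hc hcj hci)
    rw [Finset.sum_eq_single_of_mem i hi hz,
      Finset.sum_eq_single_of_mem i hi fun j hj hji => by rw [hz j hj hji, h0]]
  · push Not at h
    rw [Finset.sum_eq_zero h, h0, Finset.sum_eq_zero fun i hi => by rw [h i hi, h0]]

namespace IsJordanMultiplicative

variable {F : Type*} [Field F] {A B : Type*} [Ring A] [Algebra F A] [Ring B] [Algebra F B]
  {f : A → B}

theorem comp (hf : IsJordanMultiplicative F f) {A' G : Type*} [Ring A'] [Algebra F A']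
    [FunLike G A' A] [AlgHomClass G F A' A] (τ : G) :
    IsJordanMultiplicative F (f ∘ τ) := fun x y => by
  simp only [Function.comp_apply, map_jordanProd]
  exact hf _ _

theorem jordanProd_map_one (hf : IsJordanMultiplicative F f) (h2 : (2 : F) ≠ 0) (x : A) :
    jordanProd F (f x) (f 1) = f x := by
  rw [← hf, jordanProd_one_right h2]

theorem isIdempotentElem_map (hf : IsJordanMultiplicative F f) (h2 : (2 : F) ≠ 0) {x : A}
    (hx : IsIdempotentElem x) : IsIdempotentElem (f x) := by
  rw [IsIdempotentElem, ← jordanProd_self h2, ← hf, jordanProd_self h2, hx.eq]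

theorem orthogonalIdempotents_comp (hf : IsJordanMultiplicative F f) (h2 : (2 : F) ≠ 0)
    (h0 : f 0 = 0) {ι : Type*} {e : ι → A} (he : OrthogonalIdempotents e) :
    OrthogonalIdempotents (f ∘ e) where
  idem i := hf.isIdempotentElem_map h2 (he.idem i)
  ortho i j hij := by
    refine (hf.isIdempotentElem_map h2 (he.idem i)).mul_eq_zero_of_add_eq_zero h2 ?_
    have hjordan : jordanProd F (f (e i)) (f (e j)) = 0 := by
      rw [← hf, jordanProd_apply, he.ortho hij, he.ortho hij.symm, add_zero, smul_zero, h0]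
    simpa using (jordanProd_eq_iff h2).1 hjordan

theorem map_eq_zero_of_mul_mul_eq_zero (hf : IsJordanMultiplicative F f) (h2 : (2 : F) ≠ 0)
    {q w : A} (hq : IsIdempotentElem q) (hfq : f q = 0) (hw : (1 - q) * w * (1 - q) = 0) :
    f w = 0 := by
  rw [← hq.jordanProd_eq_of_mul_mul_eq_zero h2 hw, hf, hfq, map_zero, LinearMap.zero_apply]

theorem eq_zero_of_map_one_eq_zero (hf : IsJordanMultiplicative F f) (h2 : (2 : F) ≠ 0)
    (h1 : f 1 = 0) : f = 0 := by
  funext x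
  rw [Pi.zero_apply, ← hf.jordanProd_map_one h2 x, h1, map_zero]


theorem map_sum_of_map_one_eq_sum (hf : IsJordanMultiplicative F f) (h2 : (2 : F) ≠ 0)
    (h0 : f 0 = 0) {κ ι : Type*} [Fintype κ] [Fintype ι] {R : κ → A}
    (hR : f 1 = ∑ k, f (R k)) (b : ι → A)
    (hb : ∀ k, (Function.support fun i => jordanProd F (b i) (R k)).Subsingleton) :
    f (∑ i, b i) = ∑ i, f (b i) := by
  rw [← sub_eq_zero]
  set d := f (∑ i, b i) - ∑ i, f (b i)
  have hd_one : jordanProd F d (f 1) = d := by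
    simp only [d, map_sub, map_sum, LinearMap.sub_apply, LinearMap.sum_apply,
      hf.jordanProd_map_one h2]
  have hd_frame (k : κ) : jordanProd F d (f (R k)) = 0 := by
    rw [map_sub, LinearMap.sub_apply, ← hf, map_sum, LinearMap.sum_apply,
      map_sum_of_subsingleton_support h0 _ (hb k), map_sum, LinearMap.sum_apply, sub_eq_zero]
    exact Finset.sum_congr rfl fun i _ => hf _ _
  calc d = jordanProd F d (f 1) := hd_one.symm
    _ = ∑ k, jordanProd F d (f (R k)) := by rw [hR, map_sum]
    _ = 0 := Finset.sum_eq_zero fun k _ => hd_frame k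

end IsJordanMultiplicative

theorem OrthogonalIdempotents.iSupIndep_range {R M ι : Type*} [Semiring R] [AddCommMonoid M]
    [Module R M] {e : ι → Module.End R M} (he : OrthogonalIdempotents e) :
    iSupIndep fun i => LinearMap.range (e i) := by
  intro i
  rw [Submodule.disjoint_def]
  rintro _ ⟨u, rfl⟩ hv
  have hker : ⨆ (j) (_ : j ≠ i), LinearMap.range (e j) ≤ LinearMap.ker (e i) :=
    iSup₂_le fun j hj => by
      rintro _ ⟨w, rfl⟩
      rw [LinearMap.mem_ker, ← Module.End.mul_apply, he.ortho hj.symm, LinearMap.zero_apply]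
  simpa only [LinearMap.mem_ker, ← Module.End.mul_apply, (he.idem i).eq] using hker hv

theorem OrthogonalIdempotents.card_le_finrank {R M ι : Type*} [DivisionRing R]
    [AddCommGroup M] [Module R M] [Module.Finite R M] [Fintype ι] {e : ι → Module.End R M}
    (he : OrthogonalIdempotents e) (hne : ∀ i, e i ≠ 0) :
    Fintype.card ι ≤ Module.finrank R M := by
  classical
  have hrange (i : ι) : LinearMap.range (e i) ≠ ⊥ := by
    rw [Ne, LinearMap.range_eq_bot]
    exact hne i
  calc Fintype.card ι = Fintype.card { i // LinearMap.range (e i) ≠ ⊥ } :=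
        (Fintype.card_congr (Equiv.subtypeUnivEquiv hrange)).symm
    _ ≤ Module.finrank R M := he.iSupIndep_range.subtype_ne_bot_le_finrank

theorem CompleteOrthogonalIdempotents.isInternal_range {R M ι : Type*} [Ring R]
    [AddCommGroup M] [Module R M] [Fintype ι] [DecidableEq ι] {e : ι → Module.End R M}
    (he : CompleteOrthogonalIdempotents e) :
    DirectSum.IsInternal fun i => LinearMap.range (e i) := by
  refine (DirectSum.isInternal_submodule_iff_iSupIndep_and_iSup_eq_top _).2
    ⟨he.toOrthogonalIdempotents.iSupIndep_range, eq_top_iff.2 fun v _ => ?_⟩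
  have hv : v = ∑ i, e i v := by
    rw [← LinearMap.sum_apply, he.complete, Module.End.one_apply]
  rw [hv]
  exact Submodule.sum_mem _ fun i _ => Submodule.mem_iSup_of_mem i (LinearMap.mem_range_self _ _)

section Matrix

variable {F : Type*} [Field F] {m : Type*} [DecidableEq m]

variable (F) in
def coordProj (T : Finset m) : Matrix m m F :=
  diagonal fun k => if k ∈ T then 1 else 0

theorem coordProj_singleton (k : m) : coordProj F {k} = single k k 1 := by
  rw [coordProj, ← diagonal_single]
  congr 1
  ext l
  simp [Pi.single_apply]

variable [Fintype m] {p : Type*} [Fintype p] [DecidableEq p] {B : Type*} [Ring B] [Algebra F B]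

theorem isIdempotentElem_coordProj (T : Finset m) : IsIdempotentElem (coordProj F T) := by
  simp [IsIdempotentElem, coordProj, diagonal_mul_diagonal]

theorem sq_coordProj_erase_add_single {T : Finset m} {i j : m} (hi : i ∈ T) (hj : j ∉ T) :
    (coordProj F (T.erase i) + single i j 1 + single j i 1) ^ 2 = coordProj F (insert j T) := by
  have hij : i ≠ j := by rintro rfl; exact hj hi
  ext a b
  simp only [sq, coordProj, add_mul, mul_add, diagonal_mul_diagonal, single_mul_single_same,
    single_mul_single_of_ne _ _ _ _ hij, single_mul_single_of_ne _ _ _ _ hij.symm,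
    diagonal_mul, mul_diagonal, Matrix.add_apply, single_apply, diagonal_apply,
    Matrix.zero_apply]
  split_ifs <;> grind

theorem one_sub_coordProj_mul_mul_eq_zero {T : Finset m} {i : m} (hi : i ∈ T) (j : m) :
    (1 - coordProj F T) * (coordProj F (T.erase i) + single i j 1 + single j i 1) *
      (1 - coordProj F T) = 0 := by
  ext a b
  simp only [coordProj, sub_mul, mul_sub, one_mul, mul_one, diagonal_mul, mul_diagonal,
    Matrix.sub_apply, Matrix.add_apply, single_apply, diagonal_apply, Matrix.zero_apply]
  split_ifs <;> simp_all

theorem OrthogonalIdempotents.card_le_of_ne_zero {ι : Type*} [Fintype ι]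
    {e : ι → Matrix p p F} (he : OrthogonalIdempotents e) (hne : ∀ i, e i ≠ 0) :
    Fintype.card ι ≤ Fintype.card p := by
  have := (he.map (toLinAlgEquiv' : Matrix p p F ≃ₐ[F] _).toRingHom).card_le_finrank
    fun i => (map_ne_zero_iff _ (toLinAlgEquiv' : Matrix p p F ≃ₐ[F] _).injective).2 (hne i)
  rwa [Module.finrank_fintype_fun_eq_card] at this

namespace IsJordanMultiplicative

variable {f : Matrix m m F → B}

theorem map_coordProj_insert_eq_zero (hf : IsJordanMultiplicative F f) (h2 : (2 : F) ≠ 0)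
    {T : Finset m} {i j : m} (hi : i ∈ T) (hj : j ∉ T) (hT : f (coordProj F T) = 0) :
    f (coordProj F (insert j T)) = 0 := by
  rw [← sq_coordProj_erase_add_single hi hj, sq, ← jordanProd_self h2, hf,
    hf.map_eq_zero_of_mul_mul_eq_zero h2 (isIdempotentElem_coordProj T) hT
      (one_sub_coordProj_mul_mul_eq_zero hi j), map_zero]

theorem eq_zero_of_map_single_eq_zero (hf : IsJordanMultiplicative F f) (h2 : (2 : F) ≠ 0)
    {k : m} (hk : f (single k k 1) = 0) : f = 0 := by
  have hgrow (S : Finset m) : f (coordProj F (insert k S)) = 0 := by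
    induction S using Finset.induction_on with
    | empty => rwa [insert_empty_eq, coordProj_singleton]
    | insert j S _ ih =>
      rw [Finset.insert_comm]
      by_cases hj : j ∈ insert k S
      · rwa [Finset.insert_eq_of_mem hj]
      · exact hf.map_coordProj_insert_eq_zero h2 (Finset.mem_insert_self k S) hj ih
  refine hf.eq_zero_of_map_one_eq_zero h2 ?_
  simpa [coordProj] using hgrow Finset.univ

theorem map_one_eq_sum_map_single {f : Matrix m m F → Matrix p p F}
    (hf : IsJordanMultiplicative F f) (h2 : (2 : F) ≠ 0) (h0 : f 0 = 0) (hne : f ≠ 0)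
    (hcard : Fintype.card p ≤ Fintype.card m) :
    f 1 = ∑ k, f (single k k 1) := by
  set y : m → Matrix p p F := fun k => f (single k k 1)
  have hy : OrthogonalIdempotents y := by
    refine hf.orthogonalIdempotents_comp h2 h0 ⟨fun k => ?_, fun k l hkl => ?_⟩
    · simp [IsIdempotentElem, single_mul_single_same]
    · exact single_mul_single_of_ne _ _ _ _ hkl _
  have he := hf.isIdempotentElem_map h2 IsIdempotentElem.one
  have hye (k : m) : y k * f 1 = y k ∧ f 1 * y k = y k :=
    he.mul_eq_self_of_jordanProd_eq_self h2 (hf.jordanProd_map_one h2 _)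
  set S := ∑ k, y k
  have hS := hy.isIdempotentElem_sum (s := Finset.univ)
  have hSe : S * f 1 = S := by
    simp only [S, Finset.sum_mul, fun k => (hye k).1]
  have heS : f 1 * S = S := by
    simp only [S, Finset.mul_sum, fun k => (hye k).2]
  by_contra hneq
  have hz := hy.option (f 1 - S) (hS.sub he hSe heS)
    (by rw [sub_mul, heS, hS.eq, sub_self]) (by rw [mul_sub, hSe, hS.eq, sub_self])
  have hz_ne : ∀ o, Option.elim o (f 1 - S) y ≠ 0
    | none => sub_ne_zero.2 hneq
    | some k => fun hk => hne (hf.eq_zero_of_map_single_eq_zero h2 hk)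
  have := hz.card_le_of_ne_zero hz_ne
  rw [Fintype.card_option] at this
  omega

end IsJordanMultiplicative

theorem CompleteOrthogonalIdempotents.exists_algEquiv_diagonal {ι : Type*} [Fintype ι]
    [DecidableEq ι] {Q : ι → Matrix m m F} (hQ : CompleteOrthogonalIdempotents Q) :
    ∃ (τ : Matrix m m F ≃ₐ[F] Matrix m m F) (t : m → ι),
      ∀ i, Q i = τ (diagonal fun k => if t k = i then 1 else 0) := by
  set e := fun i => toLinAlgEquiv' (Q i)
  have he : CompleteOrthogonalIdempotents e :=
    hQ.map (toLinAlgEquiv' : Matrix m m F ≃ₐ[F] _).toRingHom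
  have hint := he.isInternal_range
  let cb := hint.collectedBasis fun i => Module.finBasis F (LinearMap.range (e i))
  have hcard : Fintype.card (Σ i, Fin (Module.finrank F (LinearMap.range (e i)))) =
      Fintype.card m := by
    rw [← Module.finrank_eq_card_basis cb, Module.finrank_fintype_fun_eq_card]
  let σ := Fintype.equivOfCardEq hcard
  let b := cb.reindex σ
  refine ⟨(toLinAlgEquiv b).trans toLinAlgEquiv'.symm, fun k => (σ.symm k).1, fun i => ?_⟩
  rw [AlgEquiv.trans_apply, AlgEquiv.eq_symm_apply]
  refine b.ext fun k => ?_
  obtain ⟨u, hu⟩ : b k ∈ LinearMap.range (e (σ.symm k).1) := by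
    rw [Module.Basis.reindex_apply]
    exact hint.collectedBasis_mem _ (σ.symm k)
  change e i (b k) = _
  rw [toLinAlgEquiv_self, Finset.sum_eq_single_of_mem k (Finset.mem_univ k)
    fun j _ hjk => by rw [diagonal_apply_ne _ hjk, zero_smul], diagonal_apply_eq, ← hu,
    ← Module.End.mul_apply]
  split_ifs with h
  · subst h
    rw [(he.idem _).eq, one_smul]
  · rw [he.ortho (Ne.symm h), zero_smul, LinearMap.zero_apply]

theorem jordanProd_diagonal_single (h2 : (2 : F) ≠ 0) (d : m → F) (k : m) :
    jordanProd F (diagonal d) (single k k 1) = d k • single k k 1 := by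
  rw [jordanProd_eq_iff h2]
  ext a b
  simp only [Matrix.add_apply, diagonal_mul, mul_diagonal, single_apply, Matrix.smul_apply,
    smul_eq_mul]
  split_ifs with h
  · obtain ⟨rfl, rfl⟩ := h
    ring
  · simp

end Matrix

theorem stmt_15 {F : Type*} [Field F] (h2 : (2 : F) ≠ 0) (n : ℕ)
    (φ : Matrix (Fin n) (Fin n) F → Matrix (Fin n) (Fin n) F)
    (hφ : ∀ X Y : Matrix (Fin n) (Fin n) F,
      φ ((2 : F)⁻¹ • (X * Y + Y * X)) = (2 : F)⁻¹ • (φ X * φ Y + φ Y * φ X))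
    (hnz : φ ≠ 0) (h0 : φ 0 = 0)
    (r : ℕ) (P : Fin r → Matrix (Fin n) (Fin n) F) (lam : Fin r → F)
    (hP : ∀ i, P i * P i = P i)
    (horth : ∀ i j, i ≠ j → P i * P j = 0) :
    φ (∑ i, lam i • P i) = ∑ i, φ (lam i • P i) := by
  have hφJ : IsJordanMultiplicative F φ := hφ
  obtain ⟨τ, t, hτ⟩ := (CompleteOrthogonalIdempotents.option
    ⟨hP, fun i j hij => horth i j hij⟩).exists_algEquiv_diagonal
  have hframe : φ 1 = ∑ k, φ (τ (single k k 1)) := by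
    simpa using (hφJ.comp τ).map_one_eq_sum_map_single h2 (by simpa using h0)
      (fun h => hnz (funext fun X => by simpa using congrFun h (τ.symm X))) le_rfl
  refine hφJ.map_sum_of_map_one_eq_sum h2 h0 hframe _ fun k i₁ h₁ i₂ h₂ => ?_
  have hsupp (i : Fin r) : jordanProd F (lam i • P i) (τ (single k k 1)) ≠ 0 → t k = some i := by
    intro h
    by_contra hne
    have hPi : P i = τ (diagonal fun l => if t l = some i then 1 else 0) := hτ (some i)
    rw [hPi, map_smul, LinearMap.smul_apply, ← map_jordanProd, jordanProd_diagonal_single h2,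
      if_neg hne, zero_smul, map_zero, smul_zero] at h
    exact h rfl
  exact Option.some_injective _ ((hsupp i₁ h₁).symm.trans (hsupp i₂ h₂))
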